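/- arXiv:2409.11344 — 4 statements merged into one kernel-verified Lean document; each statement's English description precedes it below -/
import Mathlib

section
/- For every sequence φ = (φ_i)_{i≥1} of real numbers and every n ≥ 0, the generalized Bell polynomials satisfy the recurrence Be_{n+1}^φ(x) = x·(Be_n^φ(x) + (Be_n^φ)'(x)) + φ_{n+1}·Be_n^φ(x), with Be_0^φ = 1. -/
open Polynomial

/-- The Bell polynomials: `Bell 0 = 1`, `Bell (n+1) = x·(Bell n + (Bell n)')`. -/
noncomputable def Bell : ℕ → Polynomial ℝ
  | 0 => 1
  | n + 1 => X * (Bell n + derivative (Bell n))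

/-- `Phi φ n i` is the elementary symmetric polynomial of degree `i` in `φ 1, …, φ n`. -/
noncomputable def Phi (φ : ℕ → ℝ) (n i : ℕ) : ℝ :=
  ∑ s ∈ Finset.powersetCard i (Finset.Icc 1 n), ∏ j ∈ s, φ j

/-- The generalized Bell polynomial `Be_n^φ = ∑_{j=0}^n Φ^n_{n-j} Be_j`. -/
noncomputable def genBell (φ : ℕ → ℝ) (n : ℕ) : Polynomial ℝ :=
  ∑ j ∈ Finset.range (n + 1), C (Phi φ n (n - j)) * Bell j

/-- The sequence `φ^{{l}}` obtained from `φ` by removing its `l`-th term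
(sequences indexed from 1). -/
def removeIdx (φ : ℕ → ℝ) (l : ℕ) (i : ℕ) : ℝ := if i < l then φ i else φ (i + 1)

/-- The sequence `φ^{l,M}`, obtained by adding `M` to the `l`-th term of `φ`. -/
def addAt (φ : ℕ → ℝ) (l : ℕ) (M : ℝ) (i : ℕ) : ℝ := φ i + if i = l then M else 0

/-- A finite set `U` of reals interlaces a finite set `V` if between any two consecutive
elements of `U` there lies exactly one element of `V`, and either `|U| = |V| + 1`, or
`|U| = |V|` and `max U < max V`. -/
def Interlaces (U V : Finset ℝ) : Prop :=
  (∀ u₁ ∈ U, ∀ u₂ ∈ U, u₁ < u₂ → (∀ u ∈ U, ¬(u₁ < u ∧ u < u₂)) →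
    ∃! v, v ∈ V ∧ u₁ < v ∧ v < u₂) ∧
  (U.card = V.card + 1 ∨ (U.card = V.card ∧ U.max < V.max))

/-- `zeta φ n k` is the `k`-th zero (in increasing order, `k` counted from 1) of the
generalized Bell polynomial `Be_n^φ`. -/
noncomputable def zeta (φ : ℕ → ℝ) (n k : ℕ) : ℝ :=
  ((genBell φ n).roots.toFinset.sort (· ≤ ·)).getD (k - 1) 0

/-!
Write `Be_n^φ = ∑_{i+j=n} Φ^n_i Be_j`. The Pascal rule `Φ^{n+1}_{i+1} = Φ^n_{i+1} + φ_{n+1} Φ^n_i`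
for elementary symmetric polynomials splits `Be_{n+1}^φ` into `φ_{n+1} Be_n^φ` plus
`∑_{i+j=n+1} Φ^n_i Be_j`. As `Φ^n_{n+1} = 0`, the latter is `∑_{i+j=n} Φ^n_i Be_{j+1}`, which is
`x (Be_n^φ + (Be_n^φ)')` because `p ↦ x (p + p')` is linear.
-/

open Finset

theorem Multiset.esymm_cons_succ {R : Type*} [CommSemiring R] (a : R) (s : Multiset R) (k : ℕ) :
    (a ::ₘ s).esymm (k + 1) = s.esymm (k + 1) + a * s.esymm k := by
  simp [Multiset.esymm, Multiset.powersetCard_cons, Multiset.map_map,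
    Multiset.sum_map_mul_left]

lemma Phi_eq_esymm (φ : ℕ → ℝ) (n i : ℕ) : Phi φ n i = ((Icc 1 n).val.map φ).esymm i :=
  (esymm_map_val φ _ i).symm

lemma Phi_zero_right (φ : ℕ → ℝ) (n : ℕ) : Phi φ n 0 = 1 := by
  simp [Phi]

lemma Phi_eq_zero_of_lt (φ : ℕ → ℝ) {n i : ℕ} (h : n < i) : Phi φ n i = 0 := by
  rw [Phi, powersetCard_eq_empty.2 (by simpa using h), sum_empty]

lemma Phi_succ_succ (φ : ℕ → ℝ) (n i : ℕ) :
    Phi φ (n + 1) (i + 1) = Phi φ n (i + 1) + φ (n + 1) * Phi φ n i := by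
  simp only [Phi_eq_esymm, ← insert_Icc_right_eq_Icc_add_one (Nat.le_add_left 1 n),
    insert_val_of_notMem (by simp : n + 1 ∉ Icc 1 n), Multiset.map_cons, Multiset.esymm_cons_succ]

lemma genBell_eq_sum_antidiagonal (φ : ℕ → ℝ) (n : ℕ) :
    genBell φ n = ∑ p ∈ antidiagonal n, C (Phi φ n p.1) * Bell p.2 := by
  rw [genBell, ← Nat.sum_antidiagonal_eq_sum_range_succ (fun i j => C (Phi φ n j) * Bell i),
    ← Nat.sum_antidiagonal_swap]
  rfl

lemma Bell_succ (n : ℕ) : Bell (n + 1) = X * (Bell n + derivative (Bell n)) := rfl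

lemma X_mul_add_derivative_genBell (φ : ℕ → ℝ) (n : ℕ) :
    X * (genBell φ n + derivative (genBell φ n)) =
      ∑ p ∈ antidiagonal n, C (Phi φ n p.1) * Bell (p.2 + 1) := by
  simp only [genBell_eq_sum_antidiagonal, derivative_sum, derivative_C_mul, ← sum_add_distrib,
    mul_sum, Bell_succ]
  exact sum_congr rfl fun p _ => by ring

lemma sum_antidiagonal_Phi_succ_mul (φ : ℕ → ℝ) (n : ℕ) (f : ℕ → ℝ[X]) :
    ∑ p ∈ antidiagonal (n + 1), C (Phi φ (n + 1) p.1) * f p.2 =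
      ∑ p ∈ antidiagonal (n + 1), C (Phi φ n p.1) * f p.2 +
        C (φ (n + 1)) * ∑ p ∈ antidiagonal n, C (Phi φ n p.1) * f p.2 := by
  simp only [Nat.sum_antidiagonal_succ, Phi_zero_right, Phi_succ_succ, C_add, C_mul, add_mul,
    sum_add_distrib, mul_sum, mul_assoc, add_assoc]

lemma sum_antidiagonal_succ_Phi_mul (φ : ℕ → ℝ) (n : ℕ) (f : ℕ → ℝ[X]) :
    ∑ p ∈ antidiagonal (n + 1), C (Phi φ n p.1) * f p.2 =
      ∑ p ∈ antidiagonal n, C (Phi φ n p.1) * f (p.2 + 1) := by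
  rw [Nat.sum_antidiagonal_succ', Phi_eq_zero_of_lt φ n.lt_succ_self, C_0, zero_mul, zero_add]

/-- the recurrence `Be_{n+1}^φ = x·(Be_n^φ + (Be_n^φ)') + φ_{n+1}·Be_n^φ`,
with `Be_0^φ = 1`. -/
theorem genBell_recurrence (φ : ℕ → ℝ) (n : ℕ) :
    genBell φ 0 = 1 ∧
    genBell φ (n + 1) =
      X * (genBell φ n + derivative (genBell φ n)) + C (φ (n + 1)) * genBell φ n := by
  refine ⟨by simp [genBell, Phi_zero_right, Bell], ?_⟩
  rw [X_mul_add_derivative_genBell, genBell_eq_sum_antidiagonal, genBell_eq_sum_antidiagonal,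
    sum_antidiagonal_Phi_succ_mul, sum_antidiagonal_succ_Phi_mul]
end

section
/- Let φ = (φ_i)_{i≥1} be a sequence of real numbers and, for n ≥ 0, define the numbers ρ_{n,j}^φ (0 ≤ j ≤ n) by the identity ∏_{i=1}^n (x + φ_i) = Σ_{j=0}^n ρ_{n,j}^φ · x(x−1)⋯(x−j+1) (expansion in falling factorials). Then Be_n^φ(x) = Σ_{j=0}^n ρ_{n,j}^φ x^j. -/
open Polynomial

/-- The Bell transform: linear map sending `X^n` to `Bell n`. -/
noncomputable def bellT (p : Polynomial ℝ) : Polynomial ℝ :=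
  p.sum fun n a => C a * Bell n

lemma bellT_zero : bellT 0 = 0 := Polynomial.sum_zero_index _

lemma bellT_add (p q : Polynomial ℝ) : bellT (p + q) = bellT p + bellT q := by
  unfold bellT
  apply Polynomial.sum_add_index <;> intro i <;> simp [add_mul]

lemma bellT_monomial (n : ℕ) (a : ℝ) : bellT (monomial n a) = C a * Bell n := by
  unfold bellT
  rw [Polynomial.sum_monomial_index]
  simp

lemma bellT_sum {ι : Type*} (s : Finset ι) (f : ι → Polynomial ℝ) :
    bellT (∑ i ∈ s, f i) = ∑ i ∈ s, bellT (f i) := by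
  classical
  induction s using Finset.induction with
  | empty => simpa using bellT_zero
  | insert _ _ h ih => simp [Finset.sum_insert h, bellT_add, ih]

lemma bellT_C_mul (a : ℝ) (p : Polynomial ℝ) : bellT (C a * p) = C a * bellT p := by
  induction p using Polynomial.induction_on' with
  | add p q hp hq => rw [mul_add, bellT_add, bellT_add, hp, hq, mul_add]
  | monomial n b =>
      rw [C_mul_monomial, bellT_monomial, bellT_monomial, ← mul_assoc, ← C_mul]

lemma bellT_X_mul (p : Polynomial ℝ) :
    bellT (X * p) = X * (bellT p + derivative (bellT p)) := by
  induction p using Polynomial.induction_on' with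
  | add p q hp hq =>
      rw [mul_add, bellT_add, bellT_add, hp, hq, derivative_add]; ring
  | monomial n a =>
      rw [X_mul_monomial, bellT_monomial, bellT_monomial, Bell]
      rw [derivative_C_mul]
      ring

lemma bellT_sub (p q : Polynomial ℝ) : bellT (p - q) = bellT p - bellT q := by
  have hneg : bellT (-q) = -bellT q := by
    have := bellT_C_mul (-1) q
    simpa using this
  rw [sub_eq_add_neg, bellT_add, hneg, sub_eq_add_neg]

lemma bellT_ff (j : ℕ) :
    bellT (∏ m ∈ Finset.range j, (X - C (m : ℝ))) = X ^ j := by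
  induction j with
  | zero => simpa [bellT, Bell] using bellT_monomial 0 1
  | succ j ih =>
      rw [Finset.prod_range_succ, mul_comm, sub_mul]
      rw [bellT_sub, bellT_X_mul, bellT_C_mul, ih, derivative_X_pow]
      cases j with
      | zero => simp
      | succ k =>
          have : (X : Polynomial ℝ) * (C ((k+1 : ℕ) : ℝ) * X ^ (k + 1 - 1)) =
              C ((k+1 : ℕ) : ℝ) * X ^ (k+1) := by
            rw [Nat.add_sub_cancel]; ring
          rw [mul_add, this]; ring

/-- if `∏_{i=1}^n (x + φ_i) = ∑_{j=0}^n ρ_{n,j}^φ · x(x−1)⋯(x−j+1)`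
(expansion in falling factorials), then `Be_n^φ(x) = ∑_{j=0}^n ρ_{n,j}^φ x^j`. -/
theorem genBell_eq_sum_fallingFactorial_coeffs (φ : ℕ → ℝ) (n : ℕ) (ρ : ℕ → ℝ)
    (hρ : ∏ i ∈ Finset.Icc 1 n, (X + C (φ i)) =
      ∑ j ∈ Finset.range (n + 1), C (ρ j) * ∏ m ∈ Finset.range j, (X - C (m : ℝ))) :
    genBell φ n = ∑ j ∈ Finset.range (n + 1), C (ρ j) * X ^ j := by
  have hvieta : ∏ i ∈ Finset.Icc 1 n, (X + C (φ i)) =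
      ∑ k ∈ Finset.range (n + 1), C (Phi φ n (n - k)) * X ^ k := by
    have h := Multiset.prod_X_add_C_eq_sum_esymm ((Finset.Icc 1 n).val.map φ)
    have hcard : Multiset.card ((Finset.Icc 1 n).val.map φ) = n := by
      simp [Nat.card_Icc]
    rw [hcard] at h
    have hL : ((((Finset.Icc 1 n).val.map φ)).map fun r => X + C r).prod =
        ∏ i ∈ Finset.Icc 1 n, (X + C (φ i)) := by
      rw [Multiset.map_map, Finset.prod_eq_multiset_prod]
      rfl
    rw [hL] at h
    have hes : ∀ j, ((Finset.Icc 1 n).val.map φ).esymm j = Phi φ n j := fun j =>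
      Finset.esymm_map_val φ _ j
    rw [h, ← Finset.sum_range_reflect]
    apply Finset.sum_congr rfl
    intro j hj
    rw [Finset.mem_range] at hj
    have h1 : n + 1 - 1 - j = n - j := by omega
    have h2 : n - (n - j) = j := by omega
    rw [h1, hes, h2]
  have key : bellT (∏ i ∈ Finset.Icc 1 n, (X + C (φ i))) = genBell φ n := by
    rw [hvieta, bellT_sum, genBell]
    apply Finset.sum_congr rfl
    intro j _
    rw [C_mul_X_pow_eq_monomial, bellT_monomial]
  rw [← key, hρ, bellT_sum]
  apply Finset.sum_congr rfl
  intro j _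
  rw [bellT_C_mul, bellT_ff]
end

section
/- For every sequence φ = (φ_i)_{i≥1} of real numbers, every n ≥ 0, and every real x, the series Σ_{j=0}^∞ (∏_{i=1}^n (j + φ_i)) x^j / j! converges and e^x · Be_n^φ(x) = Σ_{j=0}^∞ (∏_{i=1}^n (j + φ_i)) x^j / j!. Equivalently, Be_n^φ(x) is the generalized moment ∫_0^∞ (t+φ_1)⋯(t+φ_n) dw_x(t) of the Poisson distribution w_x = e^{−x} Σ_{j≥0} (x^j/j!) δ_j with expected value x. -/
open Polynomial

lemma bell_deriv (m : ℕ) :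
    derivative (Bell m) = ∑ i ∈ Finset.range m, C (m.choose i : ℝ) * Bell i := by
  induction m with
  | zero => simp [Bell]
  | succ m ih =>
    rw [show Bell (m+1) = X * (Bell m + derivative (Bell m)) from rfl]
    rw [derivative_mul, derivative_X, one_mul]
    rw [derivative_add, ih, derivative_sum]
    have h1 : (X : ℝ[X]) * ((∑ i ∈ Finset.range m, C (m.choose i : ℝ) * Bell i) +
        ∑ i ∈ Finset.range m, derivative (C (m.choose i : ℝ) * Bell i)) =
        ∑ i ∈ Finset.range m, C (m.choose i : ℝ) * Bell (i+1) := by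
      rw [← Finset.sum_add_distrib, Finset.mul_sum]
      refine Finset.sum_congr rfl fun i _ => ?_
      rw [derivative_mul, derivative_C, zero_mul, zero_add]
      rw [show Bell (i+1) = X * (Bell i + derivative (Bell i)) from rfl]
      ring
    rw [h1]
    rw [Finset.sum_range_succ' (fun i => C (((m+1).choose i : ℕ) : ℝ) * Bell i) m]
    have h2 : ∀ i ∈ Finset.range m, C (((m+1).choose (i+1) : ℕ) : ℝ) * Bell (i+1)
        = C ((m.choose i : ℕ) : ℝ) * Bell (i+1) + C ((m.choose (i+1) : ℕ) : ℝ) * Bell (i+1) := by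
      intro i _
      rw [Nat.choose_succ_succ, Nat.cast_add, C_add, add_mul]
    rw [Finset.sum_congr rfl h2, Finset.sum_add_distrib]
    have h3 : (∑ i ∈ Finset.range m, C ((m.choose (i+1) : ℕ) : ℝ) * Bell (i+1))
        + C (((m+1).choose 0 : ℕ) : ℝ) * Bell 0
        = ∑ i ∈ Finset.range (m+1), C ((m.choose i : ℕ) : ℝ) * Bell i := by
      rw [Finset.sum_range_succ' (fun i => C ((m.choose i : ℕ) : ℝ) * Bell i) m]
      simp
    have h4 : (∑ i ∈ Finset.range (m+1), C ((m.choose i : ℕ) : ℝ) * Bell i)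
        = (∑ i ∈ Finset.range m, C ((m.choose i : ℕ) : ℝ) * Bell i) + Bell m := by
      rw [Finset.sum_range_succ]; simp
    linear_combination -h3 - h4

lemma bell_hasSum (m : ℕ) (x : ℝ) :
    HasSum (fun j : ℕ => (j : ℝ) ^ m * x ^ j / (j.factorial : ℝ))
      (Real.exp x * (Bell m).eval x) := by
  induction m using Nat.strong_induction_on generalizing x with
  | _ m ih =>
  match m with
  | 0 =>
    simp only [pow_zero, one_mul, Bell, eval_one, mul_one]
    rw [Real.exp_eq_exp_ℝ]
    exact NormedSpace.expSeries_div_hasSum_exp x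
  | m + 1 =>
    -- first: HasSum (fun k => (k+1)^m * x^k / k!) (exp x * eval x (Bell m + derivative (Bell m)))
    have key : HasSum (fun k : ℕ => ((k : ℝ) + 1) ^ m * x ^ k / (k.factorial : ℝ))
        (Real.exp x * (Bell m + derivative (Bell m)).eval x) := by
      have h1 : ∀ k : ℕ, ((k : ℝ) + 1) ^ m * x ^ k / (k.factorial : ℝ)
          = ∑ i ∈ Finset.range (m + 1),
              (m.choose i : ℝ) * ((k : ℝ) ^ i * x ^ k / (k.factorial : ℝ)) := by
        intro k
        rw [add_pow, Finset.sum_mul, Finset.sum_div]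
        refine Finset.sum_congr rfl fun i _ => ?_
        ring
      have h2 : HasSum (fun k : ℕ => ∑ i ∈ Finset.range (m + 1),
          (m.choose i : ℝ) * ((k : ℝ) ^ i * x ^ k / (k.factorial : ℝ)))
          (∑ i ∈ Finset.range (m + 1), (m.choose i : ℝ) * (Real.exp x * (Bell i).eval x)) := by
        refine hasSum_sum fun i hi => ?_
        exact (ih i (Finset.mem_range.mp hi) x).mul_left _
      have h3 : (∑ i ∈ Finset.range (m + 1), (m.choose i : ℝ) * (Real.exp x * (Bell i).eval x))
          = Real.exp x * (Bell m + derivative (Bell m)).eval x := by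
        rw [Finset.sum_range_succ, bell_deriv]
        simp only [eval_add, eval_finset_sum, eval_mul, eval_C, Nat.choose_self, Nat.cast_one,
          Finset.mul_sum]
        rw [Finset.sum_congr rfl (fun i _ => by ring :
          ∀ i ∈ Finset.range m, (m.choose i : ℝ) * (Real.exp x * (Bell i).eval x)
            = Real.exp x * ((m.choose i : ℝ) * (Bell i).eval x))]
        rw [mul_add, Finset.mul_sum]
        ring
      rw [← h3]
      exact (funext h1 : _) ▸ h2
    have key2 : HasSum (fun k : ℕ => ((k : ℝ) + 1) ^ (m + 1) * x ^ (k + 1) / ((k + 1).factorial : ℝ))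
        (Real.exp x * (Bell (m + 1)).eval x) := by
      have : ∀ k : ℕ, ((k : ℝ) + 1) ^ (m + 1) * x ^ (k + 1) / ((k + 1).factorial : ℝ)
          = x * (((k : ℝ) + 1) ^ m * x ^ k / (k.factorial : ℝ)) := by
        intro k
        rw [Nat.factorial_succ, pow_succ _ m, pow_succ x k, Nat.cast_mul, Nat.cast_add,
          Nat.cast_one]
        have hk : ((k : ℝ) + 1) ≠ 0 := by positivity
        field_simp
      rw [funext this]
      have := key.mul_left x
      convert this using 1
      · rfl
      rw [show Bell (m + 1) = X * (Bell m + derivative (Bell m)) from rfl]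
      simp [eval_mul]
      ring
    have h0 : ((0 : ℕ) : ℝ) ^ (m + 1) * x ^ 0 / ((0).factorial : ℝ) = 0 := by simp
    refine (hasSum_nat_add_iff' 1).mp ?_
    simp only [Finset.range_one, Finset.sum_singleton, h0, sub_zero]
    convert key2 using 2 with k
    · rfl
    push_cast
    ring

lemma prod_add_expand (φ : ℕ → ℝ) (n : ℕ) (r : ℝ) :
    (∏ i ∈ Finset.Icc 1 n, (r + φ i)) =
      ∑ k ∈ Finset.range (n + 1), Phi φ n (n - k) * r ^ k := by
  classical
  set s := Finset.Icc 1 n with hs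
  have hcard : s.card = n := by simp [hs]
  rw [Finset.prod_add, Finset.sum_powerset, hcard]
  refine Finset.sum_congr rfl fun k hk => ?_
  have hk' : k ≤ n := Nat.lt_succ_iff.mp (Finset.mem_range.mp hk)
  rw [Phi, Finset.sum_mul]
  refine Finset.sum_bij' (fun t _ => s \ t) (fun u _ => s \ u) ?_ ?_ ?_ ?_ ?_
  · intro t ht
    rw [Finset.mem_powersetCard] at ht ⊢
    exact ⟨Finset.sdiff_subset, by rw [Finset.card_sdiff_of_subset ht.1, hcard, ht.2]⟩
  · intro u hu
    rw [Finset.mem_powersetCard] at hu ⊢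
    refine ⟨Finset.sdiff_subset, ?_⟩
    rw [Finset.card_sdiff_of_subset hu.1, hcard, hu.2, Nat.sub_sub_self hk']
  · intro t ht
    rw [Finset.mem_powersetCard] at ht
    exact Finset.sdiff_sdiff_eq_self ht.1
  · intro u hu
    rw [Finset.mem_powersetCard] at hu
    exact Finset.sdiff_sdiff_eq_self hu.1
  · intro t ht
    rw [Finset.mem_powersetCard] at ht
    rw [Finset.prod_const, ht.2]
    ring

/-- for every `n` and real `x`, the series
`∑_{j=0}^∞ (∏_{i=1}^n (j + φ_i)) x^j / j!` converges, with sum `e^x · Be_n^φ(x)`. -/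
theorem genBell_hasSum (φ : ℕ → ℝ) (n : ℕ) (x : ℝ) :
    HasSum (fun j : ℕ => (∏ i ∈ Finset.Icc 1 n, ((j : ℝ) + φ i)) * x ^ j / (j.factorial : ℝ))
      (Real.exp x * (genBell φ n).eval x) := by
  have h1 : ∀ j : ℕ, (∏ i ∈ Finset.Icc 1 n, ((j : ℝ) + φ i)) * x ^ j / (j.factorial : ℝ)
      = ∑ k ∈ Finset.range (n + 1),
          Phi φ n (n - k) * ((j : ℝ) ^ k * x ^ j / (j.factorial : ℝ)) := by
    intro j
    rw [prod_add_expand, Finset.sum_mul, Finset.sum_div]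
    refine Finset.sum_congr rfl fun k _ => ?_
    ring
  rw [funext h1]
  have h2 : HasSum (fun j : ℕ => ∑ k ∈ Finset.range (n + 1),
      Phi φ n (n - k) * ((j : ℝ) ^ k * x ^ j / (j.factorial : ℝ)))
      (∑ k ∈ Finset.range (n + 1), Phi φ n (n - k) * (Real.exp x * (Bell k).eval x)) :=
    hasSum_sum fun k _ => (bell_hasSum k x).mul_left _
  convert h2 using 1
  rw [genBell, eval_finset_sum, Finset.mul_sum]
  refine Finset.sum_congr rfl fun k _ => ?_
  rw [eval_mul, eval_C]
  ring
end

section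
/- Let φ = (φ_i)_{i≥1} be a sequence of real numbers and assume there exists m ≥ 1 such that φ_m < 0 and φ_i > 0 for all i ≠ m. Then for 1 ≤ n ≤ m−1 the polynomial Be_n^φ has n simple real zeros, all negative; and for n ≥ m the polynomial Be_n^φ has n simple real zeros, of which exactly n−1 are negative and exactly one is positive (and none is zero). -/
open Polynomial

namespace GenBellAux

open Finset

lemma Phi_zero (φ : ℕ → ℝ) (n : ℕ) : Phi φ n 0 = 1 := by
  simp [Phi]

lemma Phi_eq_zero (φ : ℕ → ℝ) {n i : ℕ} (h : n < i) : Phi φ n i = 0 := by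
  have : (Finset.Icc 1 n).card < i := by
    rw [Nat.card_Icc]; omega
  rw [Phi, Finset.powersetCard_eq_empty.2 this, Finset.sum_empty]

lemma Phi_succ (φ : ℕ → ℝ) (n i : ℕ) :
    Phi φ (n+1) (i+1) = Phi φ n (i+1) + φ (n+1) * Phi φ n i := by
  have hnot : (n+1) ∉ Finset.Icc 1 n := by simp
  have hins : Finset.Icc 1 (n+1) = insert (n+1) (Finset.Icc 1 n) := by
    ext a; simp [Finset.mem_Icc, Finset.mem_insert]; omega
  rw [Phi, hins, Finset.powersetCard_succ_insert hnot, Finset.sum_union, Finset.sum_image]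
  · congr 1
    rw [Phi, Finset.mul_sum]
    apply Finset.sum_congr rfl
    intro s hs
    rw [Finset.mem_powersetCard] at hs
    have : (n+1) ∉ s := fun hc => hnot (hs.1 hc)
    rw [Finset.prod_insert this]
  · intro s hs t ht hst
    rw [Finset.mem_coe, Finset.mem_powersetCard] at hs ht
    have hns : (n+1) ∉ s := fun hc => hnot (hs.1 hc)
    have hnt : (n+1) ∉ t := fun hc => hnot (ht.1 hc)
    rw [← Finset.erase_insert hns, ← Finset.erase_insert hnt, hst]
  · rw [Finset.disjoint_left]
    intro s hs hsi
    rw [Finset.mem_powersetCard] at hs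
    rw [Finset.mem_image] at hsi
    obtain ⟨t, ht, rfl⟩ := hsi
    rw [Finset.mem_powersetCard] at ht
    exact hnot (hs.1 (Finset.mem_insert_self _ _))

lemma genBell_zero (φ : ℕ → ℝ) : genBell φ 0 = 1 := by
  rw [genBell]
  simp [Phi_zero, Bell]

lemma genBell_succ (φ : ℕ → ℝ) (n : ℕ) :
    genBell φ (n+1) = X * (genBell φ n + derivative (genBell φ n)) + C (φ (n+1)) * genBell φ n := by
  have hder : derivative (genBell φ n) = ∑ j ∈ range (n+1), C (Phi φ n (n-j)) * derivative (Bell j) := by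
    rw [genBell, derivative_sum]
    exact Finset.sum_congr rfl fun j _ => by rw [derivative_C_mul]
  have hT : (∑ j ∈ range (n+2), C (Phi φ n (n+1-j)) * Bell j)
      = X * (genBell φ n + derivative (genBell φ n)) := by
    rw [Finset.sum_range_succ']
    have h0 : C (Phi φ n (n+1-0)) * Bell 0 = 0 := by
      rw [Phi_eq_zero φ (show n < n+1-0 by omega)]; simp
    rw [h0, add_zero]
    have hc : ∀ i ∈ range (n+1), C (Phi φ n (n+1-(i+1))) * Bell (i+1)
        = X * (C (Phi φ n (n-i)) * Bell i + C (Phi φ n (n-i)) * derivative (Bell i)) := by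
      intro i _
      have h1 : n+1-(i+1) = n-i := by omega
      rw [h1, show Bell (i+1) = X * (Bell i + derivative (Bell i)) from rfl]
      ring
    rw [Finset.sum_congr rfl hc, ← Finset.mul_sum, hder, genBell, ← Finset.sum_add_distrib]
  have hsum : ∀ j ∈ range (n+1), C (Phi φ (n+1) (n+1-j)) * Bell j
      = C (Phi φ n (n+1-j)) * Bell j + C (φ (n+1)) * (C (Phi φ n (n-j)) * Bell j) := by
    intro j hj; rw [mem_range] at hj
    have h1 : n+1-j = (n-j)+1 := by omega
    rw [h1, Phi_succ, C_add, C_mul]; ring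
  have main : (∑ j ∈ range (n+2), C (Phi φ (n+1) (n+1-j)) * Bell j)
      = (∑ j ∈ range (n+2), C (Phi φ n (n+1-j)) * Bell j)
        + C (φ (n+1)) * (∑ j ∈ range (n+1), C (Phi φ n (n-j)) * Bell j) := by
    rw [Finset.sum_range_succ, Finset.sum_range_succ (f := fun j => C (Phi φ n (n+1-j)) * Bell j),
      Finset.mul_sum]
    have e1 : (n+1) - (n+1) = 0 := by omega
    rw [e1, Phi_zero, Phi_zero, Finset.sum_congr rfl hsum, Finset.sum_add_distrib]
    ring
  calc genBell φ (n+1)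
      = (∑ j ∈ range (n+2), C (Phi φ n (n+1-j)) * Bell j) + C (φ (n+1)) * genBell φ n := by
        rw [genBell]; rw [genBell]; exact main
    _ = X * (genBell φ n + derivative (genBell φ n)) + C (φ (n+1)) * genBell φ n := by rw [hT]

lemma exists_root_between (Q : Polynomial ℝ) {a b : ℝ} (hab : a < b)
    (h : eval a Q * eval b Q < 0) : ∃ z, a < z ∧ z < b ∧ eval z Q = 0 := by
  have hc : ContinuousOn (fun x => eval x Q) (Set.Icc a b) :=
    (Polynomial.continuous Q).continuousOn
  rcases mul_neg_iff.mp h with ⟨h1, h2⟩ | ⟨h1, h2⟩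
  · obtain ⟨z, hz, hz0⟩ := intermediate_value_Ioo' hab.le hc (a := a) (b := b) ⟨h2, h1⟩
    exact ⟨z, hz.1, hz.2, hz0⟩
  · obtain ⟨z, hz, hz0⟩ := intermediate_value_Ioo hab.le hc (a := a) (b := b) ⟨h1, h2⟩
    exact ⟨z, hz.1, hz.2, hz0⟩

lemma exists_big (Q : Polynomial ℝ) (hQ : Q.Monic) (hd : 0 < Q.natDegree) (b : ℝ) :
    ∃ z, b < z ∧ 0 < eval z Q := by
  have ht := Q.tendsto_atTop_of_leadingCoeff_nonneg
    (natDegree_pos_iff_degree_pos.mp hd) (by rw [hQ.leadingCoeff]; norm_num)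
  obtain ⟨z, hz1, hz2⟩ := ((ht.eventually_gt_atTop 0).and (Filter.eventually_gt_atTop b)).exists
  exact ⟨z, hz2, hz1⟩

lemma exists_small (Q : Polynomial ℝ) (hQ : Q.Monic) (hd : 0 < Q.natDegree) (b : ℝ) :
    ∃ z, z < b ∧ 0 < (-1:ℝ)^Q.natDegree * eval z Q := by
  set d := Q.natDegree with hdd
  set R : Polynomial ℝ := C ((-1:ℝ)^d) * Q.comp (-X) with hR
  have hx1 : (-X : Polynomial ℝ).natDegree = 1 := by simp
  have hlcx : (-X : Polynomial ℝ).leadingCoeff = -1 := by simp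
  have hcomp_deg : (Q.comp (-X)).natDegree = d := by
    rw [natDegree_comp, hx1, mul_one]
  have hne : ((-1:ℝ)^d) ≠ 0 := by positivity
  have hRdeg : R.natDegree = d := by
    rw [hR, natDegree_C_mul hne, hcomp_deg]
  have hRlc : R.leadingCoeff = 1 := by
    rw [hR, leadingCoeff_mul, leadingCoeff_C, leadingCoeff_comp (by rw [hx1]; omega),
      hQ.leadingCoeff, hlcx, one_mul, ← hdd]
    rw [← pow_add]
    exact Even.neg_one_pow ⟨d, rfl⟩
  have ht := R.tendsto_atTop_of_leadingCoeff_nonneg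
    (natDegree_pos_iff_degree_pos.mp (by omega)) (by rw [hRlc]; norm_num)
  obtain ⟨z, hz1, hz2⟩ := ((ht.eventually_gt_atTop 0).and (Filter.eventually_gt_atTop (-b))).exists
  refine ⟨-z, by linarith, ?_⟩
  have : eval z R = (-1:ℝ)^d * eval (-z) Q := by
    rw [hR, eval_mul, eval_C, eval_comp, eval_neg, eval_X]
  rw [← this]; exact hz1

lemma neg_prod (s : Finset ℕ) (f : ℕ → ℝ) (h : ∀ a ∈ s, f a < 0) :
    0 < (-1:ℝ)^s.card * ∏ a ∈ s, f a := by
  induction s using Finset.induction_on with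
  | empty => simp
  | insert _ _ ha =>
    rename_i a s ih
    rw [Finset.card_insert_of_notMem ha, Finset.prod_insert ha, pow_succ]
    have ht := ih (fun b hb => h b (Finset.mem_insert_of_mem hb))
    have hfa := h a (Finset.mem_insert_self a s)
    nlinarith [ht, hfa]

lemma eval_derivative_prod (n : ℕ) (x : ℕ → ℝ) (i : ℕ) (hi : i ∈ range n) :
    eval (x i) (derivative (∏ j ∈ range n, (X - C (x j))))
      = ∏ j ∈ (range n).erase i, (x i - x j) := by
  have hd : derivative (∏ j ∈ range n, (X - C (x j)))
      = ∑ b ∈ range n, (∏ a ∈ (range n).erase b, (X - C (x a))) * derivative (X - C (x b)) := by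
    rw [Finset.prod_eq_multiset_prod, derivative_prod, Finset.sum_eq_multiset_sum]
    apply congrArg Multiset.sum
    apply Multiset.map_congr rfl
    intro b hb
    rw [← Finset.erase_val, ← Finset.prod_eq_multiset_prod]
  rw [hd, eval_finset_sum]
  rw [Finset.sum_eq_single i]
  · simp [eval_prod]
  · intro b hb hbi
    have hib : i ∈ (range n).erase b := Finset.mem_erase.mpr ⟨fun hc => hbi hc.symm, hi⟩
    rw [eval_mul, eval_prod, Finset.prod_eq_zero hib (by simp), zero_mul]
  · intro hni; exact absurd hi hni

lemma deriv_sign (n i : ℕ) (x : ℕ → ℝ) (hx : ∀ a b, a < b → b < n → x a < x b) (hi : i < n) :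
    0 < (-1:ℝ)^(n-1-i) * ∏ j ∈ (range n).erase i, (x i - x j) := by
  have hsplit : (range n).erase i
      = (range n).filter (· < i) ∪ (range n).filter (i < ·) := by
    ext a; simp only [Finset.mem_erase, Finset.mem_range, Finset.mem_union, Finset.mem_filter]
    omega
  have hdisj : Disjoint ((range n).filter (· < i)) ((range n).filter (i < ·)) := by
    rw [Finset.disjoint_left]; intro a ha hb
    simp only [Finset.mem_filter] at ha hb; omega
  rw [hsplit, Finset.prod_union hdisj]
  have hP1 : 0 < ∏ j ∈ (range n).filter (· < i), (x i - x j) := by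
    apply Finset.prod_pos
    intro j hj; simp only [Finset.mem_filter, Finset.mem_range] at hj
    have := hx j i hj.2 hi; linarith
  have hcard : ((range n).filter (i < ·)).card = n - 1 - i := by
    have : (range n).filter (i < ·) = Finset.Ico (i+1) n := by
      ext a; simp only [Finset.mem_filter, Finset.mem_range, Finset.mem_Ico]; omega
    rw [this, Nat.card_Ico]; omega
  have hP2 : 0 < (-1:ℝ)^(n-1-i) * ∏ j ∈ (range n).filter (i < ·), (x i - x j) := by
    rw [← hcard]
    apply neg_prod
    intro a ha; simp only [Finset.mem_filter, Finset.mem_range] at ha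
    have := hx i a ha.2 ha.1; linarith
  nlinarith [hP1, hP2]

lemma monic_eq_prod (Q : Polynomial ℝ) (hm : Q.Monic) (d : ℕ) (hd : Q.natDegree = d)
    (y : ℕ → ℝ) (hy : ∀ i j, i < j → j < d → y i < y j) (hroot : ∀ i, i < d → eval (y i) Q = 0) :
    Q = ∏ i ∈ range d, (X - C (y i)) := by
  set R := ∏ i ∈ range d, (X - C (y i)) with hR
  have hRm : R.Monic := monic_prod_of_monic _ _ (fun i _ => monic_X_sub_C _)
  have hRd : R.natDegree = d := by
    rw [hR, natDegree_prod _ _ (fun i _ => X_sub_C_ne_zero _)]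
    simp
  by_contra hne
  have hsub : Q - R ≠ 0 := sub_ne_zero.mpr hne
  have hdeglt : (Q - R).degree < Q.degree := by
    apply degree_sub_lt
    · rw [degree_eq_natDegree hm.ne_zero, degree_eq_natDegree hRm.ne_zero, hd, hRd]
    · exact hm.ne_zero
    · rw [hm.leadingCoeff, hRm.leadingCoeff]
  have hdeg : (Q - R).natDegree < d := by
    have h2 : (Q - R).degree < (d : ℕ) := by
      rw [← hd, ← degree_eq_natDegree hm.ne_zero]; exact hdeglt
    exact natDegree_lt_iff_degree_lt hsub |>.mpr h2
  have hinj : Set.InjOn y (range d) := by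
    intro i hi j hj hij
    simp only [Finset.coe_range, Set.mem_Iio] at hi hj
    rcases lt_trichotomy i j with h | h | h
    · exact absurd hij (ne_of_lt (hy i j h hj))
    · exact h
    · exact absurd hij.symm (ne_of_lt (hy j i h hi))
  have hcard : ((range d).image y).card = d := by
    rw [Finset.card_image_of_injOn hinj, Finset.card_range]
  have hzero : Q - R = 0 := by
    apply eq_zero_of_natDegree_lt_card_of_eval_eq_zero' _ ((range d).image y)
    · intro r hr
      obtain ⟨i, hi, rfl⟩ := Finset.mem_image.mp hr
      rw [Finset.mem_range] at hi
      rw [eval_sub, hroot i hi, hR, eval_prod,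
        Finset.prod_eq_zero (Finset.mem_range.mpr hi) (by simp), sub_zero]
    · rw [hcard]; exact hdeg
  exact hsub hzero

lemma chain_roots (Q : Polynomial ℝ) (k : ℕ) (u : ℕ → ℝ)
    (hmono : ∀ i, i < k → u i < u (i+1))
    (hsign : ∀ i, i ≤ k → 0 < (-1:ℝ)^(k-i) * eval (u i) Q) :
    ∃ y : ℕ → ℝ, ∀ i, i < k → u i < y i ∧ y i < u (i+1) ∧ eval (y i) Q = 0 := by
  have key : ∀ i, i < k → ∃ z, u i < z ∧ z < u (i+1) ∧ eval z Q = 0 := by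
    intro i hik
    apply exists_root_between Q (hmono i hik)
    have h1 := hsign i (le_of_lt hik)
    have h2 := hsign (i+1) hik
    have he : (k - i) = (k - (i+1)) + 1 := by omega
    rw [he, pow_succ] at h1
    set a := (-1:ℝ)^(k-(i+1)) with haa
    have ha : a * a = 1 := by rw [haa, ← pow_add]; exact Even.neg_one_pow ⟨_, rfl⟩
    nlinarith [h1, h2, ha, mul_pos h1 h2]
  choose f hf using key
  refine ⟨fun i => if h : i < k then f i h else 0, fun i hik => ?_⟩
  simp only [dif_pos hik]
  exact hf i hik

lemma mono_of_adj (f : ℕ → ℝ) (k : ℕ) (h : ∀ i, i + 1 < k → f i < f (i+1)) :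
    ∀ i j, i < j → j < k → f i < f j := by
  intro i j hij hjk
  induction j with
  | zero => omega
  | succ j ih =>
    rcases Nat.lt_or_ge i j with h1 | h1
    · exact lt_trans (ih h1 (by omega)) (h j hjk)
    · have : i = j := by omega
      subst this
      exact h i hjk

/-- The inductive invariant. -/
def Good (φ : ℕ → ℝ) (m n : ℕ) : Prop :=
  ∃ x : ℕ → ℝ,
    (∀ i j, i < j → j < n → x i < x j) ∧
    genBell φ n = ∏ i ∈ Finset.range n, (X - C (x i)) ∧
    ((n < m ∧ ∀ i, i < n → x i < 0) ∨
     (m ≤ n ∧ (∀ i, i < n - 1 → x i < 0) ∧ 0 < x (n - 1)))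

lemma good_all (φ : ℕ → ℝ) (m : ℕ) (hm : 1 ≤ m) (hφm : φ m < 0)
    (hφ : ∀ i, 1 ≤ i → i ≠ m → 0 < φ i) : ∀ n, Good φ m n := by
  intro n
  induction n with
  | zero =>
    refine ⟨fun _ => 0, by omega, by simp [genBell_zero], Or.inl ⟨by omega, by omega⟩⟩
  | succ n ih =>
    obtain ⟨x, hxmono, hxfac, hpat⟩ := ih
    set P := genBell φ n with hP
    set c := φ (n+1) with hcc
    set Q := genBell φ (n+1) with hQQ
    have hQ : Q = X * (P + derivative P) + C c * P := genBell_succ φ n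
    -- basic facts about P
    have hPm : P.Monic := by
      rw [hxfac]; exact monic_prod_of_monic _ _ (fun i _ => monic_X_sub_C _)
    have hPdeg : P.natDegree = n := by
      rw [hxfac, natDegree_prod _ _ (fun i _ => X_sub_C_ne_zero _)]
      simp
    have hPne : P ≠ 0 := hPm.ne_zero
    -- Q is monic of degree n+1
    have hPP : (P + derivative P).Monic := hPm.add_of_left (degree_derivative_lt hPne)
    have hPPdeg : (P + derivative P).natDegree = n := by
      rw [natDegree_eq_of_degree_eq (degree_add_eq_left_of_degree_lt (degree_derivative_lt hPne)),
        hPdeg]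
    have hXPP : (X * (P + derivative P)).Monic := monic_X.mul hPP
    have hXPPdeg : (X * (P + derivative P)).natDegree = n + 1 := by
      rw [natDegree_mul X_ne_zero hPP.ne_zero, natDegree_X, hPPdeg]
      omega
    have hdegCP : (C c * P).degree < (X * (P + derivative P)).degree := by
      have h1 : (C c * P).degree ≤ P.degree := by
        refine le_trans (degree_mul_le _ _) ?_
        refine le_trans (add_le_add degree_C_le le_rfl) ?_
        simp
      have h2 : P.degree < (X * (P + derivative P)).degree := by
        rw [degree_eq_natDegree hPne, degree_eq_natDegree hXPP.ne_zero, hPdeg, hXPPdeg]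
        exact_mod_cast Nat.lt_succ_self n
      exact lt_of_le_of_lt h1 h2
    have hQm : Q.Monic := by
      rw [hQ]; exact hXPP.add_of_left hdegCP
    have hQdeg : Q.natDegree = n + 1 := by
      rw [hQ, natDegree_eq_of_degree_eq (degree_add_eq_left_of_degree_lt hdegCP), hXPPdeg]
    -- evaluations
    have hQeval : ∀ t, eval t Q = t * (eval t P + eval t (derivative P)) + c * eval t P := by
      intro t; rw [hQ]; simp
    have hProot : ∀ i, i < n → eval (x i) P = 0 := by
      intro i hi
      rw [hxfac, eval_prod]
      exact Finset.prod_eq_zero (mem_range.mpr hi) (by simp)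
    have hQat : ∀ i, i < n →
        eval (x i) Q = x i * ∏ j ∈ (range n).erase i, (x i - x j) := by
      intro i hi
      rw [hQeval, hProot i hi]
      have := eval_derivative_prod n x i (mem_range.mpr hi)
      rw [hxfac]
      rw [this]
      ring
    have hD : ∀ i, i < n → 0 < (-1:ℝ)^(n-1-i) * ∏ j ∈ (range n).erase i, (x i - x j) :=
      fun i hi => deriv_sign n i x hxmono hi
    have hQsign_neg : ∀ i, i < n → x i < 0 → 0 < (-1:ℝ)^(n-i) * eval (x i) Q := by
      intro i hi hxi
      rw [hQat i hi]
      have h1 := hD i hi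
      have he : n - i = (n-1-i) + 1 := by omega
      rw [he, pow_succ]
      nlinarith [h1, hxi, mul_pos (neg_pos.mpr hxi) h1]
    have hQ0 : eval 0 Q = c * eval 0 P := by rw [hQeval]; ring
    have hP0 : eval 0 P = ∏ i ∈ range n, (-(x i)) := by
      rw [hxfac, eval_prod]
      exact Finset.prod_congr rfl (fun i _ => by simp)
    rcases hpat with ⟨hnm, hneg⟩ | ⟨hmn, hneg, hpos⟩
    · -- all roots of P are negative, n < m
      have hP0pos : 0 < eval 0 P := by
        rw [hP0]
        exact Finset.prod_pos (fun i hi => by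
          have := hneg i (mem_range.mp hi); linarith)
      set b₀ : ℝ := if n = 0 then 0 else x 0 with hb₀
      obtain ⟨A, hAlt, hAsign⟩ := exists_small Q hQm (by omega) b₀
      rw [hQdeg] at hAsign
      rcases Nat.lt_or_ge (n+1) m with hlt | hge
      · -- case n+1 < m :  c > 0, all n+1 roots of Q negative
        have hcpos : 0 < c := hφ (n+1) (by omega) (by omega)
        have hQ0pos : 0 < eval 0 Q := by rw [hQ0]; exact mul_pos hcpos hP0pos
        set u : ℕ → ℝ := fun i => if i = 0 then A else if i ≤ n then x (i-1) else 0 with hu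
        have hu0 : u 0 = A := by simp [hu]
        have hum : ∀ i, 1 ≤ i → i ≤ n → u i = x (i-1) := by
          intro i h1 h2; simp only [hu]; rw [if_neg (by omega), if_pos h2]
        have hulast : u (n+1) = 0 := by
          simp only [hu]; rw [if_neg (by omega), if_neg (by omega)]
        have hub : u 1 = b₀ := by
          rcases Nat.eq_zero_or_pos n with rfl | hn
          · rw [show (1:ℕ) = 0 + 1 from rfl, hulast]; simp [hb₀]
          · rw [hum 1 le_rfl hn, hb₀, if_neg (by omega)]
        have humono : ∀ i, i < n+1 → u i < u (i+1) := by
          intro i hik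
          rcases Nat.eq_zero_or_pos i with rfl | hipos
          · rw [hu0, show (0:ℕ)+1 = 1 from rfl, hub]; exact hAlt
          · rcases Nat.lt_or_ge i n with hin | hin
            · rw [hum i (by omega) (by omega), hum (i+1) (by omega) (by omega),
                show i + 1 - 1 = i from by omega]
              exact hxmono (i-1) i (by omega) (by omega)
            · have hieq : i = n := by omega
              rw [hieq, hum n (by omega) le_rfl, hulast]
              exact hneg (n-1) (by omega)
        have husign : ∀ i, i ≤ n+1 → 0 < (-1:ℝ)^(n+1-i) * eval (u i) Q := by
          intro i hik
          rcases Nat.eq_zero_or_pos i with rfl | hipos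
          · rw [hu0]; simpa using hAsign
          · rcases Nat.lt_or_ge n i with hin | hin
            · rw [show i = n+1 from by omega, hulast]
              simpa using hQ0pos
            · rw [hum i (by omega) hin, show n + 1 - i = n - (i-1) from by omega]
              exact hQsign_neg (i-1) (by omega) (hneg (i-1) (by omega))
        obtain ⟨y, hy⟩ := chain_roots Q (n+1) u humono husign
        have hymono : ∀ i j, i < j → j < n+1 → y i < y j := by
          apply mono_of_adj
          intro i hi
          have h1 := (hy i (by omega)).2.1
          have h2 := (hy (i+1) hi).1
          linarith
        have hyroot : ∀ i, i < n+1 → eval (y i) Q = 0 := fun i hi => (hy i hi).2.2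
        have hQfac : Q = ∏ i ∈ range (n+1), (X - C (y i)) :=
          monic_eq_prod Q hQm (n+1) hQdeg y hymono hyroot
        refine ⟨y, hymono, hQfac, Or.inl ⟨hlt, ?_⟩⟩
        intro i hi
        have h2 := (hy i hi).2.1
        have hle : u (i+1) ≤ 0 := by
          rcases Nat.lt_or_ge (i+1) (n+1) with h3 | h3
          · rw [hum (i+1) (by omega) (by omega), show i + 1 - 1 = i from by omega]
            exact le_of_lt (hneg i (by omega))
          · rw [show i + 1 = n + 1 from by omega, hulast]
        linarith
      · -- case n+1 = m : c < 0, n negative roots and one positive root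
        have hmeq : m = n + 1 := by omega
        have hcneg : c < 0 := by rw [hcc, ← hmeq]; exact hφm
        have hQ0neg : eval 0 Q < 0 := by
          rw [hQ0]; exact mul_neg_of_neg_of_pos hcneg hP0pos
        set u : ℕ → ℝ := fun i => if i = 0 then A else x (i-1) with hu
        have hu0 : u 0 = A := by simp [hu]
        have hum : ∀ i, 1 ≤ i → u i = x (i-1) := by
          intro i h1; simp only [hu]; rw [if_neg (by omega)]
        have humono : ∀ i, i < n → u i < u (i+1) := by
          intro i hik
          rcases Nat.eq_zero_or_pos i with rfl | hipos
          · rw [hu0, show (0:ℕ)+1 = 1 from rfl, hum 1 le_rfl]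
            have hbx : b₀ = x 0 := by rw [hb₀, if_neg (by omega)]
            rw [show (1:ℕ) - 1 = 0 from rfl, ← hbx]
            exact hAlt
          · rw [hum i (by omega), hum (i+1) (by omega), show i + 1 - 1 = i from by omega]
            exact hxmono (i-1) i (by omega) hik
        have husign : ∀ i, i ≤ n → 0 < (-1:ℝ)^(n-i) * eval (u i) (-Q) := by
          intro i hik
          rcases Nat.eq_zero_or_pos i with rfl | hipos
          · rw [hu0, eval_neg, show (-1:ℝ)^(n-0) * -eval A Q = (-1:ℝ)^(n+1) * eval A Q from by
              rw [Nat.sub_zero, pow_succ]; ring]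
            exact hAsign
          · rw [hum i (by omega), eval_neg]
            have h0 := hQsign_neg (i-1) (by omega) (hneg (i-1) (by omega))
            rw [show n - (i-1) = (n-i) + 1 from by omega, pow_succ] at h0
            nlinarith [h0]
        obtain ⟨y, hy⟩ := chain_roots (-Q) n u humono husign
        obtain ⟨B, hBpos, hBval⟩ := exists_big Q hQm (by omega) 0
        obtain ⟨z, hz0, hzB, hzroot⟩ := exists_root_between Q hBpos
          (by nlinarith [hQ0neg, hBval])
        set x' : ℕ → ℝ := fun i => if i < n then y i else z with hx'
        have hx'lt : ∀ i, i < n → x' i = y i := by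
          intro i hi; simp only [hx']; rw [if_pos hi]
        have hx'n : x' n = z := by simp only [hx']; rw [if_neg (by omega)]
        have hyneg : ∀ i, i < n → y i < 0 := by
          intro i hi
          have h2 := (hy i hi).2.1
          have hle : u (i+1) ≤ 0 := by
            rw [hum (i+1) (by omega), show i + 1 - 1 = i from by omega]
            exact le_of_lt (hneg i (by omega))
          linarith
        have hx'mono : ∀ i j, i < j → j < n+1 → x' i < x' j := by
          apply mono_of_adj
          intro i hi
          rcases Nat.lt_or_ge (i+1) n with h3 | h3
          · rw [hx'lt i (by omega), hx'lt (i+1) h3]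
            have h1 := (hy i (by omega)).2.1
            have h2 := (hy (i+1) h3).1
            linarith
          · rw [show i + 1 = n from by omega, hx'lt i (by omega), hx'n]
            have := hyneg i (by omega)
            linarith
        have hx'root : ∀ i, i < n+1 → eval (x' i) Q = 0 := by
          intro i hi
          rcases Nat.lt_or_ge i n with h3 | h3
          · rw [hx'lt i h3]
            have h4 := (hy i h3).2.2
            rw [eval_neg, neg_eq_zero] at h4
            exact h4
          · rw [show i = n from by omega, hx'n]
            exact hzroot
        have hQfac : Q = ∏ i ∈ range (n+1), (X - C (x' i)) :=
          monic_eq_prod Q hQm (n+1) hQdeg x' hx'mono hx'root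
        refine ⟨x', hx'mono, hQfac, Or.inr ⟨by omega, ?_, ?_⟩⟩
        · intro i hi
          have h3 : i < n := by omega
          rw [hx'lt i h3]
          exact hyneg i h3
        · rw [show n + 1 - 1 = n from by omega, hx'n]
          exact hz0
    · -- m ≤ n : P has n-1 negative roots and a positive one
      obtain ⟨p, rfl⟩ : ∃ p, n = p + 1 := ⟨n - 1, by omega⟩
      rw [show p + 1 - 1 = p from by omega] at hneg hpos
      have hcpos : 0 < c := hφ (p+2) (by omega) (by omega)
      have hP0neg : eval 0 P < 0 := by
        rw [hP0, Finset.prod_range_succ]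
        have h1 : 0 < ∏ i ∈ range p, (-(x i)) :=
          Finset.prod_pos (fun i hi => by
            have := hneg i (mem_range.mp hi); linarith)
        nlinarith [hpos, h1]
      have hQ0neg : eval 0 Q < 0 := by
        rw [hQ0]; exact mul_neg_of_pos_of_neg hcpos hP0neg
      have hQtop : 0 < eval (x p) Q := by
        rw [hQat p (by omega)]
        have h1 := hD p (by omega)
        rw [show p + 1 - 1 - p = 0 from by omega, pow_zero, one_mul] at h1
        exact mul_pos hpos h1
      set b₀ : ℝ := if p = 0 then 0 else x 0 with hb₀
      obtain ⟨A, hAlt, hAsign⟩ := exists_small Q hQm (by omega) b₀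
      rw [hQdeg] at hAsign
      set u : ℕ → ℝ := fun i => if i = 0 then A else if i ≤ p then x (i-1) else
        if i = p + 1 then 0 else x p with hu
      have hu0 : u 0 = A := by simp [hu]
      have hum : ∀ i, 1 ≤ i → i ≤ p → u i = x (i-1) := by
        intro i h1 h2; simp only [hu]; rw [if_neg (by omega), if_pos h2]
      have hup1 : u (p+1) = 0 := by
        simp only [hu]
        rw [if_neg (by omega : ¬ p + 1 = 0), if_neg (by omega : ¬ p + 1 ≤ p)]
        simp
      have hup2 : u (p+2) = x p := by
        simp only [hu]; rw [if_neg (by omega), if_neg (by omega), if_neg (by omega)]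
      have hb₀nonpos : b₀ ≤ 0 := by
        rw [hb₀]
        rcases Nat.eq_zero_or_pos p with rfl | hp0
        · simp
        · rw [if_neg (by omega)]
          exact le_of_lt (hneg 0 hp0)
      have humono : ∀ i, i < p+2 → u i < u (i+1) := by
        intro i hik
        rcases Nat.eq_zero_or_pos i with rfl | hipos
        · rw [hu0, show (0:ℕ)+1 = 1 from rfl]
          rcases Nat.eq_zero_or_pos p with rfl | hp0
          · rw [show (1:ℕ) = 0 + 1 from rfl, hup1]
            calc A < b₀ := hAlt
              _ ≤ 0 := hb₀nonpos
          · rw [hum 1 le_rfl hp0, show (1:ℕ) - 1 = 0 from rfl]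
            have hbx : b₀ = x 0 := by rw [hb₀, if_neg (by omega)]
            rw [← hbx]
            exact hAlt
        · rcases Nat.lt_or_ge i p with hin | hin
          · rw [hum i (by omega) (by omega), hum (i+1) (by omega) (by omega),
              show i + 1 - 1 = i from by omega]
            exact hxmono (i-1) i (by omega) (by omega)
          · rcases Nat.eq_or_lt_of_le hin with heq | hlt'
            · rw [← heq, hum p (by omega) le_rfl, hup1]
              exact hneg (p-1) (by omega)
            · rw [show i = p + 1 from by omega, hup1, show p + 1 + 1 = p + 2 from rfl, hup2]
              exact hpos
      have husign : ∀ i, i ≤ p+2 → 0 < (-1:ℝ)^(p+2-i) * eval (u i) Q := by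
        intro i hik
        rcases Nat.eq_zero_or_pos i with rfl | hipos
        · rw [hu0]; simpa using hAsign
        · rcases Nat.lt_or_ge p i with hin | hin
          · rcases Nat.eq_or_lt_of_le (show i ≤ p + 2 from hik) with heq | hlt'
            · rw [heq, hup2, show p + 2 - (p + 2) = 0 from by omega, pow_zero, one_mul]
              exact hQtop
            · rw [show i = p + 1 from by omega, hup1,
                show p + 2 - (p + 1) = 1 from by omega, pow_one]
              nlinarith [hQ0neg]
          · rw [hum i (by omega) hin, show p + 2 - i = p + 1 - (i-1) from by omega]
            exact hQsign_neg (i-1) (by omega) (hneg (i-1) (by omega))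
      obtain ⟨y, hy⟩ := chain_roots Q (p+2) u humono husign
      have hymono : ∀ i j, i < j → j < p+2 → y i < y j := by
        apply mono_of_adj
        intro i hi
        have h1 := (hy i (by omega)).2.1
        have h2 := (hy (i+1) hi).1
        linarith
      have hyroot : ∀ i, i < p+2 → eval (y i) Q = 0 := fun i hi => (hy i hi).2.2
      have hQfac : Q = ∏ i ∈ range (p+2), (X - C (y i)) :=
        monic_eq_prod Q hQm (p+2) hQdeg y hymono hyroot
      refine ⟨y, hymono, hQfac, Or.inr ⟨by omega, ?_, ?_⟩⟩
      · intro i hi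
        rw [show p + 1 + 1 - 1 = p + 1 from by omega] at hi
        have h2 := (hy i (by omega)).2.1
        have hle : u (i+1) ≤ 0 := by
          rcases Nat.lt_or_ge (i+1) (p+1) with h3 | h3
          · rw [hum (i+1) (by omega) (by omega), show i + 1 - 1 = i from by omega]
            exact le_of_lt (hneg i (by omega))
          · rw [show i + 1 = p + 1 from by omega, hup1]
        linarith
      · rw [show p + 1 + 1 - 1 = p + 1 from by omega]
        have h1 := (hy (p+1) (by omega)).1
        rw [hup1] at h1
        exact h1

lemma roots_eq (φ : ℕ → ℝ) (n : ℕ) (x : ℕ → ℝ)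
    (hfac : genBell φ n = ∏ i ∈ range n, (X - C (x i))) :
    (genBell φ n).roots = Multiset.map x (Finset.range n).val := by
  have hne : (∏ i ∈ range n, (X - C (x i))) ≠ 0 :=
    (monic_prod_of_monic _ _ (fun i _ => monic_X_sub_C _)).ne_zero
  rw [hfac, roots_prod _ _ hne]
  simp only [roots_X_sub_C]
  exact Multiset.bind_singleton _ _

lemma roots_card (φ : ℕ → ℝ) (n : ℕ) (x : ℕ → ℝ)
    (hfac : genBell φ n = ∏ i ∈ range n, (X - C (x i))) :
    (genBell φ n).roots.card = n := by
  rw [roots_eq φ n x hfac, Multiset.card_map]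
  exact Finset.card_range n

lemma roots_nodup (φ : ℕ → ℝ) (n : ℕ) (x : ℕ → ℝ)
    (hmono : ∀ i j, i < j → j < n → x i < x j)
    (hfac : genBell φ n = ∏ i ∈ range n, (X - C (x i))) :
    (genBell φ n).roots.Nodup := by
  rw [roots_eq φ n x hfac]
  apply Multiset.Nodup.map_on
  · intro i hi j hj hij
    rw [← Finset.mem_def, Finset.mem_range] at hi hj
    rcases lt_trichotomy i j with h | h | h
    · exact absurd hij (ne_of_lt (hmono i j h hj))
    · exact h
    · exact absurd hij.symm (ne_of_lt (hmono j i h hi))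
  · exact (Finset.range n).nodup

end GenBellAux

/-- if `φ_m < 0` and `φ_i > 0` for `i ≠ m`, then for `1 ≤ n ≤ m−1` the
polynomial `Be_n^φ` has `n` simple real zeros, all negative; and for `n ≥ m` it has `n`
simple real zeros, exactly `n−1` negative and exactly one positive (and none zero). -/
theorem genBell_one_negative_param_roots (φ : ℕ → ℝ) (m : ℕ) (hm : 1 ≤ m) (hφm : φ m < 0)
    (hφ : ∀ i, 1 ≤ i → i ≠ m → 0 < φ i) :
    (∀ n, 1 ≤ n → n ≤ m - 1 →
      (genBell φ n).roots.card = n ∧ (genBell φ n).roots.Nodup ∧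
        ∀ x ∈ (genBell φ n).roots, x < 0) ∧
    (∀ n, m ≤ n →
      (genBell φ n).roots.card = n ∧ (genBell φ n).roots.Nodup ∧
        ((genBell φ n).roots.filter (fun x => x < 0)).card = n - 1 ∧
        ((genBell φ n).roots.filter (fun x => 0 < x)).card = 1 ∧
        ¬ (genBell φ n).IsRoot 0) := by
  have good := GenBellAux.good_all φ m hm hφm hφ
  constructor
  · intro n hn1 hn2
    obtain ⟨ξ, hmono, hfac, hpat⟩ := good n
    have hneg : ∀ i, i < n → ξ i < 0 := by
      rcases hpat with ⟨_, h⟩ | ⟨hmn, _, _⟩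
      · exact h
      · omega
    refine ⟨GenBellAux.roots_card φ n ξ hfac, GenBellAux.roots_nodup φ n ξ hmono hfac, ?_⟩
    intro r hr
    rw [GenBellAux.roots_eq φ n ξ hfac, Multiset.mem_map] at hr
    obtain ⟨i, hi, rfl⟩ := hr
    rw [← Finset.mem_def, Finset.mem_range] at hi
    exact hneg i hi
  · intro n hmn2
    obtain ⟨ξ, hmono, hfac, hpat⟩ := good n
    have hpat' : (∀ i, i < n - 1 → ξ i < 0) ∧ 0 < ξ (n-1) := by
      rcases hpat with ⟨h, _⟩ | ⟨_, h2, h3⟩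
      · omega
      · exact ⟨h2, h3⟩
    obtain ⟨hneg, hpos⟩ := hpat'
    have hn1 : 1 ≤ n := le_trans hm hmn2
    have hroots := GenBellAux.roots_eq φ n ξ hfac
    have hxne : ∀ i, i < n → ξ i ≠ 0 := by
      intro i hi
      rcases Nat.lt_or_ge i (n-1) with h | h
      · exact ne_of_lt (hneg i h)
      · rw [show i = n - 1 from by omega]
        exact ne_of_gt hpos
    refine ⟨GenBellAux.roots_card φ n ξ hfac, GenBellAux.roots_nodup φ n ξ hmono hfac, ?_, ?_, ?_⟩
    · rw [hroots, Multiset.filter_map, Multiset.card_map, ← Finset.filter_val,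
        show (Finset.range n).filter ((fun r : ℝ => r < 0) ∘ ξ) = Finset.range (n-1) from ?_]
      · exact Finset.card_range (n-1)
      · ext i
        simp only [Finset.mem_filter, Finset.mem_range, Function.comp]
        constructor
        · rintro ⟨h1, h2⟩
          by_contra hc
          rw [show i = n - 1 from by omega] at h2
          linarith
        · intro h
          exact ⟨by omega, hneg i h⟩
    · rw [hroots, Multiset.filter_map, Multiset.card_map, ← Finset.filter_val,
        show (Finset.range n).filter ((fun r : ℝ => 0 < r) ∘ ξ) = {n-1} from ?_]
      · rfl
      · ext i
        simp only [Finset.mem_filter, Finset.mem_range, Function.comp, Finset.mem_singleton]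
        constructor
        · rintro ⟨h1, h2⟩
          by_contra hc
          have := hneg i (by omega)
          linarith
        · intro h
          subst h
          exact ⟨by omega, hpos⟩
    · intro hroot
      have hne : genBell φ n ≠ 0 := by
        rw [hfac]
        exact (Polynomial.monic_prod_of_monic _ _ (fun i _ => Polynomial.monic_X_sub_C _)).ne_zero
      have h0 : (0:ℝ) ∈ (genBell φ n).roots := (Polynomial.mem_roots hne).mpr hroot
      rw [hroots, Multiset.mem_map] at h0
      obtain ⟨i, hi, hxi⟩ := h0
      rw [← Finset.mem_def, Finset.mem_range] at hi
      exact hxne i hi hxi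
end
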